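/- Let A ∈ ℂ^{m×p} (m ≥ p) be full rank with polar factor U = P(A), and let Ũ ∈ ℂ^{m×p} have orthonormal columns. Then ‖(I − ŨŨ*)A‖_F ≤ 2‖U − Ũ‖_F · σ₁(A). -/

import Mathlib

open Matrix
open scoped ComplexOrder

/-- Frobenius norm of a complex matrix. -/
noncomputable def frob {m p : ℕ} (A : Matrix (Fin m) (Fin p) ℂ) : ℝ :=
  Real.sqrt (∑ i, ∑ j, ‖A i j‖ ^ 2)

/-- Euclidean norm of a complex vector. -/
noncomputable def vnorm {p : ℕ} (x : Fin p → ℂ) : ℝ :=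
  Real.sqrt (∑ i, ‖x i‖ ^ 2)

/-- The largest singular value of a matrix, characterized as the supremum of `‖A x‖`
over unit vectors `x`. -/
noncomputable def sigmaMax {m p : ℕ} (A : Matrix (Fin m) (Fin p) ℂ) : ℝ :=
  sSup {r : ℝ | ∃ x : Fin p → ℂ, vnorm x = 1 ∧ r = vnorm (A.mulVec x)}

/-! Since `(I - ŨŨ*)Ũ = 0`, we have `(I - ŨŨ*)A = (I - ŨŨ*)(U - Ũ)H`. The orthogonal projection
`I - ŨŨ*` does not increase the length of any column, and right multiplication by the Hermitian
factor `H` scales Frobenius norms by at most `‖H‖₂ = σ₁(A)`, because `‖Hx‖ = ‖UHx‖ = ‖Ax‖`.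
This gives the sharper bound `‖(I - ŨŨ*)A‖_F ≤ ‖U - Ũ‖_F σ₁(A)`. -/

section VectorNorm

variable {n : ℕ}

lemma vnorm_nonneg (x : Fin n → ℂ) : 0 ≤ vnorm x := Real.sqrt_nonneg _

lemma vnorm_sq (x : Fin n → ℂ) : vnorm x ^ 2 = ∑ i, ‖x i‖ ^ 2 :=
  Real.sq_sqrt (Finset.sum_nonneg fun _ _ => sq_nonneg _)

lemma vnorm_sq_eq_re_dotProduct (x : Fin n → ℂ) : vnorm x ^ 2 = (star x ⬝ᵥ x).re := by
  simp [vnorm_sq, dotProduct, Complex.re_sum, Complex.sq_norm, Complex.normSq_apply]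

lemma vnorm_smul (c : ℂ) (x : Fin n → ℂ) : vnorm (c • x) = ‖c‖ * vnorm x := by
  rw [vnorm, vnorm, ← Real.sqrt_sq (norm_nonneg c), ← Real.sqrt_mul (sq_nonneg _),
    Finset.mul_sum]
  simp [mul_pow]

lemma vnorm_eq_zero {x : Fin n → ℂ} (hx : vnorm x = 0) : x = 0 := by
  rw [vnorm, Real.sqrt_eq_zero'] at hx
  have hsum := le_antisymm hx (Finset.sum_nonneg fun i _ => sq_nonneg ‖x i‖)
  rw [Finset.sum_eq_zero_iff_of_nonneg fun i _ => sq_nonneg _] at hsum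
  funext i
  simpa using hsum i (Finset.mem_univ i)

end VectorNorm

section MatrixVector

variable {m n : ℕ}

lemma vnorm_mulVec_le_frob_mul (A : Matrix (Fin m) (Fin n) ℂ) (x : Fin n → ℂ) :
    vnorm (A *ᵥ x) ≤ frob A * vnorm x := by
  rw [vnorm, frob, vnorm, ← Real.sqrt_mul (Finset.sum_nonneg fun _ _ =>
    Finset.sum_nonneg fun _ _ => sq_nonneg _), Finset.sum_mul]
  refine Real.sqrt_le_sqrt (Finset.sum_le_sum fun i _ => ?_)
  calc ‖(A *ᵥ x) i‖ ^ 2 ≤ (∑ j, ‖A i j‖ * ‖x j‖) ^ 2 := by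
        gcongr
        exact (norm_sum_le Finset.univ fun j => A i j * x j).trans_eq (by simp only [norm_mul])
    _ ≤ (∑ j, ‖A i j‖ ^ 2) * ∑ j, ‖x j‖ ^ 2 := Finset.sum_mul_sq_le_sq_mul_sq _ _ _

lemma sigmaMax_nonneg (A : Matrix (Fin m) (Fin n) ℂ) : 0 ≤ sigmaMax A :=
  Real.sSup_nonneg (by rintro r ⟨x, -, rfl⟩; exact vnorm_nonneg _)

lemma vnorm_mulVec_le_sigmaMax_mul (A : Matrix (Fin m) (Fin n) ℂ) (x : Fin n → ℂ) :
    vnorm (A *ᵥ x) ≤ sigmaMax A * vnorm x := by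
  rcases eq_or_ne (vnorm x) 0 with hx | hx
  · simp [vnorm_eq_zero hx, vnorm]
  have hpos : 0 < vnorm x := (vnorm_nonneg x).lt_of_ne' hx
  set y : Fin n → ℂ := ((vnorm x : ℂ)⁻¹) • x
  have hy : vnorm y = 1 := by
    rw [vnorm_smul, norm_inv, Complex.norm_real, Real.norm_of_nonneg hpos.le,
      inv_mul_cancel₀ hx]
  have hAy : vnorm (A *ᵥ x) = vnorm x * vnorm (A *ᵥ y) := by
    rw [mulVec_smul, vnorm_smul, norm_inv, Complex.norm_real, Real.norm_of_nonneg hpos.le,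
      mul_inv_cancel_left₀ hx]
  have hbdd : BddAbove {r : ℝ | ∃ z : Fin n → ℂ, vnorm z = 1 ∧ r = vnorm (A *ᵥ z)} :=
    ⟨frob A, by
      rintro r ⟨z, hz, rfl⟩
      simpa [hz] using vnorm_mulVec_le_frob_mul A z⟩
  rw [hAy, mul_comm]
  exact mul_le_mul_of_nonneg_right (le_csSup hbdd ⟨y, hy, rfl⟩) hpos.le

lemma vnorm_mulVec_of_conjTranspose_mul_self {V : Matrix (Fin m) (Fin n) ℂ}
    (hV : Vᴴ * V = 1) (x : Fin n → ℂ) : vnorm (V *ᵥ x) = vnorm x := by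
  rw [← sq_eq_sq₀ (vnorm_nonneg _) (vnorm_nonneg _), vnorm_sq_eq_re_dotProduct,
    vnorm_sq_eq_re_dotProduct, star_mulVec, dotProduct_mulVec, vecMul_vecMul, hV, vecMul_one]

lemma one_sub_mul_conjTranspose_mul_self {V : Matrix (Fin m) (Fin n) ℂ} (hV : Vᴴ * V = 1) :
    (1 - V * Vᴴ) * V = 0 := by
  rw [Matrix.sub_mul, Matrix.one_mul, Matrix.mul_assoc, hV, Matrix.mul_one, sub_self]

lemma vnorm_one_sub_mul_conjTranspose_mulVec_le {V : Matrix (Fin m) (Fin n) ℂ}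
    (hV : Vᴴ * V = 1) (x : Fin m → ℂ) : vnorm ((1 - V * Vᴴ) *ᵥ x) ≤ vnorm x := by
  set P : Matrix (Fin m) (Fin m) ℂ := 1 - V * Vᴴ
  have hP_herm : Pᴴ = P := by simp [P, conjTranspose_sub, conjTranspose_mul]
  have hP_idem : P * P = P := by
    rw [Matrix.mul_sub, Matrix.mul_one, ← Matrix.mul_assoc,
      one_sub_mul_conjTranspose_mul_self hV, Matrix.zero_mul, sub_zero]
  -- Pythagoras for `x = P x + V (Vᴴ x)`
  have hpyth : star (P *ᵥ x) ⬝ᵥ (P *ᵥ x) = star x ⬝ᵥ x - star (Vᴴ *ᵥ x) ⬝ᵥ (Vᴴ *ᵥ x) := by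
    rw [star_mulVec, hP_herm, dotProduct_mulVec, vecMul_vecMul, hP_idem, ← dotProduct_mulVec,
      star_mulVec, conjTranspose_conjTranspose, sub_mulVec, one_mulVec, dotProduct_sub,
      ← mulVec_mulVec, dotProduct_mulVec]
  have hsq : vnorm (P *ᵥ x) ^ 2 = vnorm x ^ 2 - vnorm (Vᴴ *ᵥ x) ^ 2 := by
    simp only [vnorm_sq_eq_re_dotProduct, hpyth, Complex.sub_re]
  exact pow_le_pow_iff_left₀ (vnorm_nonneg _) (vnorm_nonneg _) two_ne_zero |>.mp
    (hsq ▸ sub_le_self _ (sq_nonneg _))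

end MatrixVector

section Frobenius

variable {k m n : ℕ}

lemma frob_nonneg (A : Matrix (Fin m) (Fin n) ℂ) : 0 ≤ frob A := Real.sqrt_nonneg _

lemma frob_sq_eq_sum_vnorm_sq (A : Matrix (Fin m) (Fin n) ℂ) :
    frob A ^ 2 = ∑ j, vnorm (Aᵀ j) ^ 2 := by
  rw [frob, Real.sq_sqrt (Finset.sum_nonneg fun _ _ => Finset.sum_nonneg fun _ _ =>
    sq_nonneg _), Finset.sum_comm]
  simp [vnorm_sq]

lemma frob_conjTranspose (A : Matrix (Fin m) (Fin n) ℂ) : frob Aᴴ = frob A := by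
  rw [frob, frob, Finset.sum_comm]
  simp

lemma frob_mul_le_of_vnorm_mulVec_le {B : Matrix (Fin k) (Fin m) ℂ} {c : ℝ} (hc : 0 ≤ c)
    (hB : ∀ x, vnorm (B *ᵥ x) ≤ c * vnorm x) (X : Matrix (Fin m) (Fin n) ℂ) :
    frob (B * X) ≤ c * frob X := by
  refine pow_le_pow_iff_left₀ (frob_nonneg _) (by positivity [frob_nonneg X]) two_ne_zero |>.mp ?_
  rw [frob_sq_eq_sum_vnorm_sq, mul_pow, frob_sq_eq_sum_vnorm_sq, Finset.mul_sum]
  refine Finset.sum_le_sum fun j _ => ?_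
  rw [← mul_pow]
  exact pow_le_pow_left₀ (vnorm_nonneg _) (hB (Xᵀ j)) 2

lemma frob_mul_le_of_isHermitian {H : Matrix (Fin n) (Fin n) ℂ} (hH : H.IsHermitian) {c : ℝ}
    (hc : 0 ≤ c) (hB : ∀ x, vnorm (H *ᵥ x) ≤ c * vnorm x) (X : Matrix (Fin m) (Fin n) ℂ) :
    frob (X * H) ≤ c * frob X := by
  rw [← frob_conjTranspose, conjTranspose_mul, hH.eq, ← frob_conjTranspose X]
  exact frob_mul_le_of_vnorm_mulVec_le hc hB _

lemma frob_one_sub_mul_conjTranspose_mul_le {V : Matrix (Fin m) (Fin k) ℂ} (hV : Vᴴ * V = 1)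
    (X : Matrix (Fin m) (Fin n) ℂ) : frob ((1 - V * Vᴴ) * X) ≤ frob X := by
  simpa using frob_mul_le_of_vnorm_mulVec_le zero_le_one
    (by simpa using vnorm_one_sub_mul_conjTranspose_mulVec_le hV) X

end Frobenius

theorem range_discrepancy_bound_general {m p : ℕ}
    (A U U' : Matrix (Fin m) (Fin p) ℂ) (H : Matrix (Fin p) (Fin p) ℂ)
    (hAUH : A = U * H) (hU : Uᴴ * U = 1) (hH : H.PosDef)
    (hU' : U'ᴴ * U' = 1) :
    frob ((1 - U' * U'ᴴ) * A) ≤ 2 * frob (U - U') * sigmaMax A := by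
  have hσ := sigmaMax_nonneg A
  have hH_le : ∀ x, vnorm (H *ᵥ x) ≤ sigmaMax A * vnorm x := fun x => by
    rw [← vnorm_mulVec_of_conjTranspose_mul_self hU, mulVec_mulVec, ← hAUH]
    exact vnorm_mulVec_le_sigmaMax_mul A x
  have hA_eq : (1 - U' * U'ᴴ) * A = (1 - U' * U'ᴴ) * ((U - U') * H) := by
    rw [Matrix.sub_mul U U' H, ← hAUH, Matrix.mul_sub, ← Matrix.mul_assoc,
      one_sub_mul_conjTranspose_mul_self hU', Matrix.zero_mul, sub_zero]
  calc frob ((1 - U' * U'ᴴ) * A) ≤ frob ((U - U') * H) := by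
        rw [hA_eq]
        exact frob_one_sub_mul_conjTranspose_mul_le hU' _
    _ ≤ sigmaMax A * frob (U - U') := frob_mul_le_of_isHermitian hH.isHermitian hσ hH_le _
    _ ≤ 2 * frob (U - U') * sigmaMax A := by nlinarith [mul_nonneg hσ (frob_nonneg (U - U'))]

theorem range_discrepancy_bound {m p : ℕ} (hmp : p ≤ m)
    (A U U' : Matrix (Fin m) (Fin p) ℂ) (H : Matrix (Fin p) (Fin p) ℂ)
    (hA : A.rank = p)
    (hAUH : A = U * H) (hU : Uᴴ * U = 1) (hH : H.PosDef)
    (hU' : U'ᴴ * U' = 1) :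
    frob ((1 - U' * U'ᴴ) * A) ≤ 2 * frob (U - U') * sigmaMax A :=
  range_discrepancy_bound_general A U U' H hAUH hU hH hU'
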